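/- Let w > 0, a ∈ ℝ, and φ ∈ (0,1). For b ∈ ℝ define I₁(b) := η(φ·Q(−w·a) + (1−φ)·Q(−w·b)) + η(φ·Q(w·a) + (1−φ)·Q(w·b)) − φ·(η(Q(−w·a)) + η(Q(w·a))) − (1−φ)·(η(Q(−w·b)) + η(Q(w·b))), the binary-input mutual information of the one-bit-ADC real Gaussian channel with gain w and inputs a (probability φ) and b (probability 1−φ). Then I₁(b) converges, as b → ∞, to f_φ(Q(−w·a)) = h(φ·Q(w·a)) − φ·h(Q(−w·a)). -/

import Mathlib

open MeasureTheory Real Filter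

/-- The standard Gaussian tail function `Q(x) = ∫_x^∞ (2π)^{-1/2} e^{-u²/2} du`. -/
noncomputable def gaussQ (x : ℝ) : ℝ :=
  ∫ u in Set.Ioi x, (Real.sqrt (2 * Real.pi))⁻¹ * Real.exp (-u ^ 2 / 2)

/-- `η(t) = -t log t` (with `η(0) = 0`, automatic since `Real.log 0 = 0`). -/
noncomputable def eta (t : ℝ) : ℝ := -t * Real.log t

/-- The binary entropy function `h(p) = -p log p - (1-p) log (1-p)`. -/
noncomputable def binEnt (p : ℝ) : ℝ := eta p + eta (1 - p)

/-- `f_φ(p) = h(φ(1-p)) - φ·h(p)`. -/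
noncomputable def fphi (φ p : ℝ) : ℝ := binEnt (φ * (1 - p)) - φ * binEnt p

/-- Binary-input mutual information of the real Gaussian channel with gain `w`
followed by a one-bit ADC, with input `x₁` w.p. `φ` and `x₂` w.p. `1-φ`. -/
noncomputable def miOneBit (w φ x₁ x₂ : ℝ) : ℝ :=
  (eta (φ * gaussQ (-(w * x₁)) + (1 - φ) * gaussQ (-(w * x₂)))
      - φ * eta (gaussQ (-(w * x₁))) - (1 - φ) * eta (gaussQ (-(w * x₂))))
    + (eta (φ * gaussQ (w * x₁) + (1 - φ) * gaussQ (w * x₂))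
      - φ * eta (gaussQ (w * x₁)) - (1 - φ) * eta (gaussQ (w * x₂)))

/-! `I₁(b)` is a sum of two Jensen gaps of `η` evaluated at `Q(-w b)` and `Q(w b)`, which tend to
`1` and `0` since `Q` is the tail of a probability density. As `η` is continuous on all of `ℝ`,
the limit is obtained by substituting these values, and `Q(-x) = 1 - Q(x)` turns it into
`f_φ(Q(-w a))`. -/

open ProbabilityTheory Set Topology

lemma gaussQ_eq_setIntegral_gaussianPDFReal (x : ℝ) :
    gaussQ x = ∫ u in Ioi x, gaussianPDFReal 0 1 u := by
  simp [gaussQ, gaussianPDFReal]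

lemma gaussQ_neg (x : ℝ) : gaussQ (-x) = 1 - gaussQ x := by
  have hsymm : gaussQ (-x) = ∫ u in Iic x, gaussianPDFReal 0 1 u := by
    rw [gaussQ_eq_setIntegral_gaussianPDFReal, ← integral_comp_neg_Iic]
    simp [gaussianPDFReal]
  have hsplit := intervalIntegral.integral_Iic_add_Ioi (b := x)
    (integrable_gaussianPDFReal 0 1).integrableOn (integrable_gaussianPDFReal 0 1).integrableOn
  rw [integral_gaussianPDFReal_eq_one 0 one_ne_zero] at hsplit
  rw [hsymm, gaussQ_eq_setIntegral_gaussianPDFReal]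
  linarith

lemma tendsto_gaussQ_atTop : Tendsto gaussQ atTop (𝓝 0) := by
  have h := tendsto_setIntegral_of_antitone (μ := volume) (f := gaussianPDFReal 0 1)
    (fun x : ℝ => measurableSet_Ioi) (fun _ _ hxy => Ioi_subset_Ioi hxy)
    ⟨0, (integrable_gaussianPDFReal 0 1).integrableOn⟩
  have hempty : ⋂ x : ℝ, Ioi x = ∅ := iInter_eq_empty_iff.2 fun u => ⟨u, lt_irrefl u⟩
  simpa [hempty, funext gaussQ_eq_setIntegral_gaussianPDFReal] using h

lemma tendsto_gaussQ_atBot : Tendsto gaussQ atBot (𝓝 1) := by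
  have h := (tendsto_gaussQ_atTop.comp tendsto_neg_atBot_atTop).const_sub (1 : ℝ)
  simpa [Function.comp_def, gaussQ_neg] using h

@[fun_prop]
lemma continuous_eta : Continuous eta :=
  Real.continuous_mul_log.neg.congr fun t => (neg_mul t (Real.log t)).symm

lemma fphi_one_sub (φ q : ℝ) :
    fphi φ (1 - q) = binEnt (φ * q) - φ * binEnt (1 - q) := by
  rw [fphi, sub_sub_cancel]

noncomputable def etaJensenGap (φ s t : ℝ) : ℝ :=
  eta (φ * s + (1 - φ) * t) - φ * eta s - (1 - φ) * eta t

lemma miOneBit_eq_etaJensenGap_add (w φ x₁ x₂ : ℝ) :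
    miOneBit w φ x₁ x₂ = etaJensenGap φ (gaussQ (-(w * x₁))) (gaussQ (-(w * x₂)))
      + etaJensenGap φ (gaussQ (w * x₁)) (gaussQ (w * x₂)) := rfl

@[fun_prop]
lemma continuous_etaJensenGap (φ s : ℝ) : Continuous (etaJensenGap φ s) := by
  unfold etaJensenGap
  fun_prop

lemma etaJensenGap_one_sub_one_add_etaJensenGap_zero (φ q : ℝ) :
    etaJensenGap φ (1 - q) 1 + etaJensenGap φ q 0 = binEnt (φ * q) - φ * binEnt (1 - q) := by
  simp only [etaJensenGap, binEnt, eta, sub_sub_cancel, Real.log_one]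
  ring_nf

theorem miOneBit_tendsto_general (w a φ : ℝ) (hw : 0 < w) :
    Tendsto (fun b : ℝ => miOneBit w φ a b) atTop
        (nhds (fphi φ (gaussQ (-(w * a))))) ∧
      fphi φ (gaussQ (-(w * a)))
        = binEnt (φ * gaussQ (w * a)) - φ * binEnt (gaussQ (-(w * a))) := by
  have hlimit : fphi φ (gaussQ (-(w * a)))
      = etaJensenGap φ (gaussQ (-(w * a))) 1 + etaJensenGap φ (gaussQ (w * a)) 0 := by
    rw [gaussQ_neg, fphi_one_sub, etaJensenGap_one_sub_one_add_etaJensenGap_zero]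
  refine ⟨?_, by rw [gaussQ_neg, fphi_one_sub]⟩
  have hwb : Tendsto (fun b : ℝ => w * b) atTop atTop := tendsto_id.const_mul_atTop hw
  have hQneg : Tendsto (fun b => gaussQ (-(w * b))) atTop (𝓝 1) :=
    tendsto_gaussQ_atBot.comp (tendsto_neg_atTop_atBot.comp hwb)
  have hQpos : Tendsto (fun b => gaussQ (w * b)) atTop (𝓝 0) := tendsto_gaussQ_atTop.comp hwb
  simp only [miOneBit_eq_etaJensenGap_add, hlimit]
  exact (((continuous_etaJensenGap φ _).tendsto 1).comp hQneg).add
    (((continuous_etaJensenGap φ _).tendsto 0).comp hQpos)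

/-- As `b → ∞`, the one-bit-ADC binary-input mutual information `I₁(b)` with inputs
`a` (w.p. `φ`) and `b` (w.p. `1-φ`) converges to
`f_φ(Q(-w·a)) = h(φ·Q(w·a)) - φ·h(Q(-w·a))`. -/
theorem miOneBit_tendsto (w a φ : ℝ) (hw : 0 < w) (hφ : φ ∈ Set.Ioo (0 : ℝ) 1) :
    Tendsto (fun b : ℝ => miOneBit w φ a b) atTop
        (nhds (fphi φ (gaussQ (-(w * a))))) ∧
      fphi φ (gaussQ (-(w * a)))
        = binEnt (φ * gaussQ (w * a)) - φ * binEnt (gaussQ (-(w * a))) :=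
  miOneBit_tendsto_general w a φ hw
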